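/- For a complex number α with 0 < Re α < 1/2 and any real r, the integral ∫₀^∞ (e^x + e^{−x} − 2)^{−α} e^{−irx} dx equals Γ(α + ir)Γ(1 − 2α)/Γ(1 − α + ir). -/
import Mathlib


open Real Complex

private theorem ekb_image : (fun x : ℝ => Real.exp (-x)) '' Set.Ioi 0 = Set.Ioo 0 1 := by
  ext y
  constructor
  · rintro ⟨x, hx, rfl⟩
    exact ⟨Real.exp_pos _, Real.exp_lt_one_iff.mpr (neg_neg_iff_pos.mpr hx)⟩
  · rintro ⟨hy0, hy1⟩
    refine ⟨-Real.log y, ?_, by simp [Real.exp_log hy0]⟩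
    simpa using Real.log_neg hy0 hy1

private theorem ekb_deriv : ∀ x ∈ Set.Ioi (0:ℝ),
    HasDerivWithinAt (fun x : ℝ => Real.exp (-x)) (-Real.exp (-x)) (Set.Ioi 0) x :=
  fun x _ ↦ mul_neg_one (Real.exp (-x)) ▸
    ((Real.hasDerivAt_exp (-x)).comp x (hasDerivAt_neg x)).hasDerivWithinAt

private theorem ekb_inj : Set.InjOn (fun x : ℝ => Real.exp (-x)) (Set.Ioi 0) :=
  (Real.exp_injective.comp neg_injective).injOn

/-- `∫₀^∞ (eˣ + e⁻ˣ − 2)^(−α) e^(−irx) dx = Γ(α+ir)Γ(1−2α)/Γ(1−α+ir)` for `0 < Re α < 1/2`. -/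
theorem exp_kernel_beta_integral (α : ℂ) (r : ℝ) (h0 : 0 < α.re) (h1 : α.re < 1 / 2) :
    ∫ x in Set.Ioi (0 : ℝ),
        ((Real.exp x + Real.exp (-x) - 2 : ℝ) : ℂ) ^ (-α) *
          Complex.exp (-Complex.I * (r : ℂ) * (x : ℂ)) =
      Complex.Gamma (α + Complex.I * r) * Complex.Gamma (1 - 2 * α) /
        Complex.Gamma (1 - α + Complex.I * r) := by
  set u : ℂ := α + Complex.I * r with hu_def
  set v : ℂ := 1 - 2 * α with hv_def
  have hu : 0 < u.re := by
    simp only [hu_def, Complex.add_re, Complex.mul_re, Complex.I_re, Complex.I_im,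
      Complex.ofReal_re, Complex.ofReal_im]
    simpa using h0
  have hv : 0 < v.re := by
    simp only [hv_def, Complex.sub_re, Complex.one_re, Complex.mul_re]
    norm_num
    linarith
  -- the integral equals the Beta integral
  have hbeta : (∫ x in Set.Ioi (0 : ℝ),
      ((Real.exp x + Real.exp (-x) - 2 : ℝ) : ℂ) ^ (-α) *
        Complex.exp (-Complex.I * (r : ℂ) * (x : ℂ))) = Complex.betaIntegral u v := by
    rw [Complex.betaIntegral, intervalIntegral.integral_of_le (by norm_num : (0:ℝ) ≤ 1),
      MeasureTheory.integral_Ioc_eq_integral_Ioo, ← ekb_image,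
      MeasureTheory.integral_image_eq_integral_abs_deriv_smul measurableSet_Ioi ekb_deriv ekb_inj]
    refine (MeasureTheory.setIntegral_congr_fun measurableSet_Ioi fun x hx => ?_).symm
    have hx : (0:ℝ) < x := hx
    set y : ℝ := Real.exp (-x) with hy_def
    have hy0 : 0 < y := Real.exp_pos _
    have hy1 : y < 1 := Real.exp_lt_one_iff.mpr (by simpa using hx)
    have hy1' : (0:ℝ) < 1 - y := by linarith
    have hyC : (y:ℂ) ≠ 0 := Complex.ofReal_ne_zero.mpr hy0.ne'
    have h1yC : (1 - (y:ℂ)) ≠ 0 := by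
      rw [show (1 - (y:ℂ)) = ((1 - y : ℝ) : ℂ) by push_cast; ring]
      exact Complex.ofReal_ne_zero.mpr hy1'.ne'
    have habs : |(-Real.exp (-x))| = y := by
      rw [abs_neg, abs_of_pos (Real.exp_pos _)]
    -- base factorization
    have hbase : (Real.exp x + Real.exp (-x) - 2 : ℝ) = (1 - y) * (1 - y) * y⁻¹ := by
      have hex : Real.exp x = y⁻¹ := by
        rw [hy_def, Real.exp_neg, inv_inv]
      rw [hex, ← hy_def]
      field_simp
      ring
    -- rewrite the base power
    have hbasepow : ((Real.exp x + Real.exp (-x) - 2 : ℝ) : ℂ) ^ (-α)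
        = (1 - (y:ℂ)) ^ (v - 1) * (y:ℂ) ^ α := by
      rw [hbase, Complex.ofReal_mul, Complex.mul_cpow_ofReal_nonneg (by positivity) (by positivity),
        Complex.ofReal_mul, Complex.mul_cpow_ofReal_nonneg hy1'.le hy1'.le]
      have h1 : ((1 - y : ℝ) : ℂ) = 1 - (y:ℂ) := by push_cast; ring
      have h2 : ((y⁻¹ : ℝ) : ℂ) = (y:ℂ)⁻¹ := by push_cast; ring
      rw [h1, h2, Complex.inv_cpow _ _ (by
        rw [Complex.arg_ofReal_of_nonneg hy0.le]; exact Real.pi_ne_zero.symm),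
        ← Complex.cpow_neg, neg_neg, ← Complex.cpow_add _ _ h1yC]
      congr 1
      rw [hv_def]; ring
    -- rewrite the exponential
    have hexp : Complex.exp (-Complex.I * (r : ℂ) * (x : ℂ)) = (y:ℂ) ^ (Complex.I * r) := by
      rw [Complex.cpow_def_of_ne_zero hyC, ← Complex.ofReal_log hy0.le, hy_def,
        Real.log_exp]
      congr 1
      push_cast
      ring
    rw [hexp, hbasepow, habs]
    rw [Complex.real_smul]
    calc (y:ℂ) * ((y:ℂ) ^ (u - 1) * (1 - (y:ℂ)) ^ (v - 1))
        = (y:ℂ) ^ (1:ℂ) * (y:ℂ) ^ (u - 1) * (1 - (y:ℂ)) ^ (v - 1) := by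
          rw [Complex.cpow_one]; ring
      _ = (y:ℂ) ^ u * (1 - (y:ℂ)) ^ (v - 1) := by
          rw [← Complex.cpow_add _ _ hyC]; norm_num
      _ = (1 - (y:ℂ)) ^ (v - 1) * (y:ℂ) ^ α * (y:ℂ) ^ (Complex.I * r) := by
          rw [mul_assoc, ← Complex.cpow_add _ _ hyC, ← hu_def]; exact mul_comm _ _
  rw [hbeta]
  have hG := Complex.Gamma_mul_Gamma_eq_betaIntegral hu hv
  have huv : u + v = 1 - α + Complex.I * r := by rw [hu_def, hv_def]; ring
  have hne : Complex.Gamma (1 - α + Complex.I * r) ≠ 0 := by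
    apply Complex.Gamma_ne_zero_of_re_pos
    simp only [Complex.add_re, Complex.sub_re, Complex.one_re, Complex.mul_re, Complex.I_re,
      Complex.I_im, Complex.ofReal_re, Complex.ofReal_im]
    norm_num
    linarith
  rw [huv] at hG
  rw [eq_div_iff hne]
  linear_combination -hG
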